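/- arXiv:2212.10831 — 6 statements merged into one kernel-verified Lean document; each statement's English description precedes it below -/
import Mathlib

section
/- Every solution of the equation P_n = (1/9)(a·10^(l+m+k) − (a−b)·10^(m+k) − (b−c)·10^k − c), with n ≥ 1, l,m,k ≥ 1, 1 ≤ a ≤ 9, 0 ≤ b,c ≤ 9, satisfies (l+m+k)·log 10 − 3 < n·log α < (l+m+k)·log 10 + 1. -/
def padovan : ℕ → ℕ
  | 0 => 1
  | 1 => 1
  | 2 => 1
  | n + 3 => padovan (n + 1) + padovan n

lemma alpha_gt_one (α : ℝ) (h : α ^ 3 = α + 1) : 1 < α := by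
  nlinarith [sq_nonneg α, sq_nonneg (α - 1), sq_nonneg (α + 1), sq_nonneg (α ^ 2 - 1),
    sq_nonneg (α ^ 2 + α)]

lemma alpha_lt (α : ℝ) (h : α ^ 3 = α + 1) : α < 1.4 := by
  have h1 := alpha_gt_one α h
  nlinarith [sq_nonneg (α - 1.4), sq_nonneg (α - 1)]

lemma pad_le (α : ℝ) (hα : α ^ 3 = α + 1) : ∀ n, (padovan n : ℝ) ≤ α ^ n := by
  have h1 := alpha_gt_one α hα
  intro n
  induction n using Nat.strong_induction_on with
  | _ n ih =>
    match n with
    | 0 => simp [padovan]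
    | 1 => simpa [padovan] using h1.le
    | 2 => simp only [padovan, Nat.cast_one]; nlinarith
    | n + 3 =>
      have h2 := ih (n + 1) (by omega)
      have h3 := ih n (by omega)
      have key : (α ^ n) * α ^ 3 = α ^ (n + 1) + α ^ n := by rw [hα]; ring
      simp only [padovan]
      push_cast
      calc (padovan (n+1) : ℝ) + padovan n ≤ α ^ (n+1) + α ^ n := by linarith
        _ = α ^ (n + 3) := by rw [← key]; ring

lemma pad_ge (α : ℝ) (hα : α ^ 3 = α + 1) : ∀ n, α ^ n ≤ α ^ 3 * padovan n := by
  have h1 := alpha_gt_one α hα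
  have h2 := alpha_lt α hα
  intro n
  induction n using Nat.strong_induction_on with
  | _ n ih =>
    match n with
    | 0 => simp [padovan]; nlinarith
    | 1 => simp [padovan]; nlinarith
    | 2 => simp [padovan]; nlinarith
    | n + 3 =>
      have h3 := ih (n + 1) (by omega)
      have h4 := ih n (by omega)
      have key : (α ^ n) * α ^ 3 = α ^ (n + 1) + α ^ n := by rw [hα]; ring
      simp only [padovan]
      push_cast
      calc α ^ (n + 3) = α ^ (n + 1) + α ^ n := by rw [← key]; ring
        _ ≤ α ^ 3 * padovan (n+1) + α ^ 3 * padovan n := by linarith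
        _ = α ^ 3 * ((padovan (n+1) : ℝ) + padovan n) := by ring

theorem padovan_concat_log_bounds (α : ℝ) (hα : α ^ 3 = α + 1)
    (n l m k a b c : ℕ)
    (hn : 1 ≤ n) (hl : 1 ≤ l) (hm : 1 ≤ m) (hk : 1 ≤ k)
    (ha1 : 1 ≤ a) (ha : a ≤ 9) (hb : b ≤ 9) (hc : c ≤ 9)
    (heq : (9 * padovan n : ℤ) =
      (a : ℤ) * 10 ^ (l + m + k) - ((a : ℤ) - (b : ℤ)) * 10 ^ (m + k)
        - ((b : ℤ) - (c : ℤ)) * 10 ^ k - (c : ℤ)) :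
    ((l + m + k : ℝ)) * Real.log 10 - 3 < (n : ℝ) * Real.log α ∧
    (n : ℝ) * Real.log α < ((l + m + k : ℝ)) * Real.log 10 + 1 := by
  obtain ⟨L, hL⟩ : ∃ L, L = l + m + k := ⟨l + m + k, rfl⟩
  rw [← hL] at heq
  have h1 := alpha_gt_one α hα
  have h14 := alpha_lt α hα
  have e2 : (9 * padovan n : ℤ) =
      (a : ℤ) * (10 ^ L - 10 ^ (m + k)) + (b : ℤ) * (10 ^ (m + k) - 10 ^ k)
        + (c : ℤ) * (10 ^ k - 1) := by rw [heq]; ring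
  have hA : (10 : ℤ) ^ (m + k) ≤ 10 ^ L := pow_le_pow_right₀ (by norm_num) (by omega)
  have hB : (10 : ℤ) ^ k ≤ 10 ^ (m + k) := pow_le_pow_right₀ (by norm_num) (by omega)
  have hC : (1 : ℤ) ≤ 10 ^ k := one_le_pow₀ (by norm_num)
  have hA' : (10 : ℤ) ^ (m + k + 1) ≤ 10 ^ L := pow_le_pow_right₀ (by norm_num) (by omega)
  have hA'' : (10 : ℤ) ^ (m + k + 1) = 10 * 10 ^ (m + k) := by ring
  have haZ : (a : ℤ) ≤ 9 := by exact_mod_cast ha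
  have ha1Z : (1 : ℤ) ≤ (a : ℤ) := by exact_mod_cast ha1
  have hbZ : (b : ℤ) ≤ 9 := by exact_mod_cast hb
  have hcZ : (c : ℤ) ≤ 9 := by exact_mod_cast hc
  have t1 : (a : ℤ) * (10 ^ L - 10 ^ (m + k)) ≤ 9 * (10 ^ L - 10 ^ (m + k)) :=
    mul_le_mul_of_nonneg_right haZ (by linarith)
  have t2 : (b : ℤ) * (10 ^ (m + k) - 10 ^ k) ≤ 9 * (10 ^ (m + k) - 10 ^ k) :=
    mul_le_mul_of_nonneg_right hbZ (by linarith)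
  have t3 : (c : ℤ) * (10 ^ k - 1) ≤ 9 * (10 ^ k - 1) :=
    mul_le_mul_of_nonneg_right hcZ (by linarith)
  have hupZ : (padovan n : ℤ) ≤ 10 ^ L - 1 := by linarith
  have t4 : (1 : ℤ) * (10 ^ L - 10 ^ (m + k)) ≤ (a : ℤ) * (10 ^ L - 10 ^ (m + k)) :=
    mul_le_mul_of_nonneg_right ha1Z (by linarith)
  have t5 : (0 : ℤ) ≤ (b : ℤ) * (10 ^ (m + k) - 10 ^ k) :=
    mul_nonneg (by positivity) (by linarith)
  have t6 : (0 : ℤ) ≤ (c : ℤ) * (10 ^ k - 1) :=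
    mul_nonneg (by positivity) (by linarith)
  have hlowZ : (10 : ℤ) ^ L ≤ 10 * padovan n := by linarith
  have hupR : (padovan n : ℝ) ≤ 10 ^ L - 1 := by exact_mod_cast hupZ
  have hlowR : (10 : ℝ) ^ L ≤ 10 * padovan n := by exact_mod_cast hlowZ
  have hpadpos : (0 : ℝ) < padovan n := by
    nlinarith [pow_pos (by norm_num : (0:ℝ) < 10) L]
  have hPle : (padovan n : ℝ) ≤ α ^ n := pad_le α hα n
  have hPge : α ^ n ≤ α ^ 3 * padovan n := pad_ge α hα n
  have hlog10 : Real.log 10 < 3 := by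
    rw [Real.log_lt_iff_lt_exp (by norm_num)]
    have h3 : Real.exp 3 = Real.exp 1 ^ 3 := by
      rw [← Real.exp_nat_mul]; norm_num
    have he := Real.exp_one_gt_d9
    have h4 : (2.7182818283 : ℝ) ^ 3 ≤ Real.exp 1 ^ 3 :=
      pow_le_pow_left₀ (by norm_num) he.le 3
    rw [h3]
    calc (10 : ℝ) < 2.7182818283 ^ 3 := by norm_num
      _ ≤ Real.exp 1 ^ 3 := h4
  have hlogα1 : Real.log (α ^ 3) < 1 := by
    rw [hα, Real.log_lt_iff_lt_exp (by linarith)]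
    have := Real.exp_one_gt_d9
    calc α + 1 < 1.4 + 1 := by linarith
      _ < Real.exp 1 := by norm_num at this ⊢; linarith
  have hlogαpos : 0 < Real.log α := Real.log_pos h1
  have hLcast : (L : ℝ) = (l : ℝ) + m + k := by rw [hL]; push_cast; ring
  have hlog3 : Real.log (α ^ 3) = 3 * Real.log α := by
    rw [Real.log_pow]; push_cast; ring
  constructor
  · have l1 : Real.log (10 ^ L) ≤ Real.log (10 * padovan n) :=
      Real.log_le_log (by positivity) hlowR
    have l2 : Real.log (padovan n) ≤ Real.log (α ^ n) :=
      Real.log_le_log hpadpos hPle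
    rw [Real.log_pow] at l1 l2
    rw [Real.log_mul (by norm_num) (ne_of_gt hpadpos)] at l1
    rw [hLcast] at l1
    push_cast
    push_cast at l1 l2
    linarith
  · have u1 : Real.log (α ^ n) ≤ Real.log (α ^ 3 * padovan n) :=
      Real.log_le_log (by positivity) hPge
    have u2 : Real.log (padovan n) < Real.log (10 ^ L) :=
      Real.log_lt_log hpadpos (by linarith)
    rw [Real.log_mul (by positivity) (ne_of_gt hpadpos), hlog3] at u1
    rw [Real.log_pow] at u1 u2
    rw [hLcast] at u2
    push_cast
    push_cast at u1 u2
    linarith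
end

section
/- For all n ≥ 1, |P_n − C_α·α^n| < α^(−n/2), where C_α = (α+1)/(−α^2 + 3α + 1) and α is the real root of x^3 − x − 1. -/
section SecondOrder

variable {s p : ℝ} {u : ℕ → ℝ}

/-- The norm form `(y - β x) (y - γ x)` of the roots `β, γ` of `X^2 - s X + p`. -/
def normForm (s p x y : ℝ) : ℝ := y ^ 2 - s * x * y + p * x ^ 2

lemma normForm_succ (hu : ∀ n, u (n + 2) = s * u (n + 1) - p * u n) (n : ℕ) :
    normForm s p (u (n + 1)) (u (n + 2)) = p * normForm s p (u n) (u (n + 1)) := by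
  simp only [normForm, hu n]
  ring

lemma normForm_eq_pow_mul (hu : ∀ n, u (n + 2) = s * u (n + 1) - p * u n) (n : ℕ) :
    normForm s p (u n) (u (n + 1)) = p ^ n * normForm s p (u 0) (u 1) := by
  induction n with
  | zero => simp
  | succ n ih => rw [normForm_succ hu, ih, pow_succ]; ring

lemma mul_sq_le_normForm (s p x y : ℝ) : (p - s ^ 2 / 4) * x ^ 2 ≤ normForm s p x y := by
  have hsq : normForm s p x y = (y - s / 2 * x) ^ 2 + (p - s ^ 2 / 4) * x ^ 2 := by
    unfold normForm; ring
  rw [hsq]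
  exact le_add_of_nonneg_left (sq_nonneg _)

lemma sq_lt_pow_of_normForm_lt (hu : ∀ n, u (n + 2) = s * u (n + 1) - p * u n)
    (hdisc : 0 < p - s ^ 2 / 4) (h01 : normForm s p (u 0) (u 1) < p - s ^ 2 / 4) (n : ℕ) :
    u n ^ 2 < p ^ n := by
  have hp : 0 < p := by nlinarith [sq_nonneg s]
  have hle := mul_sq_le_normForm s p (u n) (u (n + 1))
  rw [normForm_eq_pow_mul hu] at hle
  have hlt := hle.trans_lt (mul_lt_mul_of_pos_left h01 (pow_pos hp n))
  rw [mul_comm (p ^ n)] at hlt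
  exact lt_of_mul_lt_mul_left hlt hdisc.le

end SecondOrder

section Plastic

variable {α : ℝ}

lemma plastic_gt (hα : α ^ 3 = α + 1) : 1.32 < α := by
  nlinarith [sq_nonneg (α + 0.66)]

lemma plastic_lt (hα : α ^ 3 = α + 1) : α < 1.33 := by
  nlinarith [sq_nonneg (α + 0.665)]

lemma quadratic_rec_of_padovan_rec (hα : α ^ 3 = α + 1) (hα0 : α ≠ 0) {u : ℕ → ℝ}
    (hu : ∀ n, u (n + 3) = u (n + 1) + u n) (h2 : u 2 = -α * u 1 - α⁻¹ * u 0) (n : ℕ) :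
    u (n + 2) = -α * u (n + 1) - α⁻¹ * u n := by
  induction n with
  | zero => exact h2
  | succ n ih =>
    rw [hu n, ih]
    field_simp
    linear_combination (-u (n + 1)) * hα

lemma padovan_sub_mul_pow_rec (hα : α ^ 3 = α + 1) (C : ℝ) (n : ℕ) :
    (padovan (n + 3) : ℝ) - C * α ^ (n + 3) =
      ((padovan (n + 1) : ℝ) - C * α ^ (n + 1)) + ((padovan n : ℝ) - C * α ^ n) := by
  simp only [padovan, Nat.cast_add]
  linear_combination (-C * α ^ n) * hα

lemma plastic_normForm_disc_pos (hα : α ^ 3 = α + 1) : 0 < α⁻¹ - (-α) ^ 2 / 4 := by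
  have hα0 : 0 < α := by linarith [plastic_gt hα]
  have : α * (α⁻¹ - (-α) ^ 2 / 4) = 1 - α ^ 3 / 4 := by field_simp
  nlinarith [plastic_lt hα]

section Constant

variable {C : ℝ}

lemma binet_const_quadratic_rec (hα : α ^ 3 = α + 1) (hC : C = (α + 1) / (-α ^ 2 + 3 * α + 1)) :
    1 - C * α ^ 2 = -α * (1 - C * α) - α⁻¹ * (1 - C) := by
  have hD : -α ^ 2 + 3 * α + 1 ≠ 0 := by nlinarith [plastic_gt hα, plastic_lt hα]
  have hα0 : α ≠ 0 := by linarith [plastic_gt hα]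
  have hC' : C * (2 * α + 3) = α ^ 2 + α + 1 := by
    rw [hC, div_mul_eq_mul_div, div_eq_iff hD]
    linear_combination (α - 2) * hα
  field_simp
  linear_combination (-1) * hC' - 2 * C * hα

lemma normForm_binet_const_lt (hα : α ^ 3 = α + 1) (hC : C = (α + 1) / (-α ^ 2 + 3 * α + 1)) :
    normForm (-α) α⁻¹ (1 - C) (1 - C * α) < α⁻¹ - (-α) ^ 2 / 4 := by
  have h1 := plastic_gt hα
  have h2 := plastic_lt hα
  have hD : 0 < -α ^ 2 + 3 * α + 1 := by nlinarith
  have hCl : 0.72 < C := by rw [hC, lt_div_iff₀ hD]; nlinarith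
  have hCu : C < 0.725 := by rw [hC, div_lt_iff₀ hD]; nlinarith
  have hE0 : 0 < 1 - C := by linarith
  have hE1 : 0 < 1 - C * α := by nlinarith
  have hE1u : 1 - C * α < 0.05 := by nlinarith
  have hα0 : 0 < α := by linarith
  suffices α * normForm (-α) α⁻¹ (1 - C) (1 - C * α) < α * (α⁻¹ - (-α) ^ 2 / 4) from
    lt_of_mul_lt_mul_left this hα0.le
  have hl : α * normForm (-α) α⁻¹ (1 - C) (1 - C * α) =
      α * (1 - C * α) ^ 2 + α ^ 2 * (1 - C) * (1 - C * α) + (1 - C) ^ 2 := by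
    unfold normForm; field_simp; ring
  have hr : α * (α⁻¹ - (-α) ^ 2 / 4) = 1 - α ^ 3 / 4 := by field_simp
  rw [hl, hr]
  nlinarith [mul_pos (mul_pos hα0 hα0) hE0, mul_pos hE1 hE1]

end Constant

end Plastic

lemma abs_lt_rpow_neg_half_of_sq_lt {a x : ℝ} (ha : 0 < a) {n : ℕ} (h : x ^ 2 < a⁻¹ ^ n) :
    |x| < a ^ (-(n : ℝ) / 2) := by
  have hsq : (a ^ (-(n : ℝ) / 2)) ^ 2 = a⁻¹ ^ n := by
    rw [← Real.rpow_natCast (a ^ _), ← Real.rpow_mul ha.le, inv_pow, ← Real.rpow_natCast a n,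
      ← Real.rpow_neg ha.le]
    norm_num
  exact abs_lt_of_sq_lt_sq (hsq ▸ h) (Real.rpow_pos_of_pos ha _).le

theorem padovan_binet_error (α : ℝ) (hα : α ^ 3 = α + 1)
    (C : ℝ) (hC : C = (α + 1) / (-α ^ 2 + 3 * α + 1)) :
    ∀ n : ℕ, 1 ≤ n → |(padovan n : ℝ) - C * α ^ n| < α ^ (-(n : ℝ) / 2) := by
  intro n _
  have hα0 : 0 < α := by linarith [plastic_gt hα]
  set E : ℕ → ℝ := fun n => (padovan n : ℝ) - C * α ^ n
  have hrec : ∀ n, E (n + 2) = -α * E (n + 1) - α⁻¹ * E n :=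
    quadratic_rec_of_padovan_rec hα hα0.ne' (padovan_sub_mul_pow_rec hα C)
      (by simpa [E, padovan] using binet_const_quadratic_rec hα hC)
  have hsq : E n ^ 2 < α⁻¹ ^ n :=
    sq_lt_pow_of_normForm_lt hrec (plastic_normForm_disc_pos hα)
      (by simpa [E, padovan] using normForm_binet_const_lt hα hC) n
  exact abs_lt_rpow_neg_half_of_sq_lt hα0 hsq
end

section
/- There is no positive integer n and integers a, l, m, k with 1 ≤ a ≤ 9 and l, m, k ≥ 1 such that C_α·α^n = (a/9)·10^(l+m+k), where α is the real root of x^3 − x − 1 and C_α = (α+1)/(−α^2+3α+1). -/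
/-!
Clearing denominators and using `α + 1 = α ^ 3`, the equation becomes
`9 α ^ (n + 3) = Q (-α ^ 2 + 3 α + 1)` with `Q = a 10 ^ (l + m + k) > 0`. The power `α ^ (n + 3)`
has nonnegative integer coordinates in the basis `1, α, α ^ 2`, so the `α ^ 2`-coordinate of the
difference is `9 p + Q > 0`. This contradicts the `ℚ`-linear independence of `1, α, α ^ 2`, which
holds because `X ^ 3 - X - 1` is irreducible over `ℚ` (Selmer) and hence is the minimal polynomial of `α`.
-/

open Polynomial

theorem exists_nat_coeffs_pow_of_pow_three_eq {R : Type*} [CommSemiring R] {α : R}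
    (hα : α ^ 3 = α + 1) (n : ℕ) :
    ∃ p q r : ℕ, α ^ n = p * α ^ 2 + q * α + r := by
  induction n with
  | zero => exact ⟨0, 0, 1, by simp⟩
  | succ n ih =>
    obtain ⟨p, q, r, h⟩ := ih
    refine ⟨q, p + r, p, ?_⟩
    calc α ^ (n + 1) = p * α ^ 3 + q * α ^ 2 + r * α := by rw [pow_succ, h]; ring
      _ = _ := by rw [hα]; push_cast; ring

section CubeEqAddOne

variable {K : Type*} [Field K] [CharZero K] {α : K}

theorem minpoly_eq_X_pow_three_sub_X_sub_one (hα : α ^ 3 = α + 1) :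
    minpoly ℚ α = X ^ 3 - X - 1 :=
  (minpoly.eq_of_irreducible_of_monic (X_pow_sub_X_sub_one_irreducible_rat (by norm_num))
    (by simp [hα]) (by monicity!)).symm

theorem eq_zero_of_mul_sq_add_mul_add_eq_zero (hα : α ^ 3 = α + 1) {a b c : ℚ}
    (h : a * α ^ 2 + b * α + c = 0) : a = 0 := by
  by_contra ha
  have hdeg := minpoly.degree_le_of_ne_zero ℚ α (p := C a * X ^ 2 + C b * X + C c)
    (ne_zero_of_coe_le_degree (degree_quadratic ha).ge) (by simpa using h)
  rw [minpoly_eq_X_pow_three_sub_X_sub_one hα, degree_quadratic ha] at hdeg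
  have hdeg_cubic : (X ^ 3 - X - 1 : ℚ[X]).degree = 3 := by compute_degree!
  rw [hdeg_cubic] at hdeg
  exact absurd hdeg (by decide)

end CubeEqAddOne

theorem gamma_one_nonzero (α : ℝ) (hα : α ^ 3 = α + 1)
    (C : ℝ) (hC : C = (α + 1) / (-α ^ 2 + 3 * α + 1)) :
    ¬ ∃ n a l m k : ℕ, 1 ≤ n ∧ 1 ≤ a ∧ a ≤ 9 ∧ 1 ≤ l ∧ 1 ≤ m ∧ 1 ≤ k ∧
      C * α ^ n = ((a : ℝ) / 9) * 10 ^ (l + m + k) := by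
  rintro ⟨n, a, l, m, k, -, ha, -, -, -, -, heq⟩
  have hD : -α ^ 2 + 3 * α + 1 ≠ 0 := fun h ↦ by
    have := eq_zero_of_mul_sq_add_mul_add_eq_zero hα (a := -1) (b := 3) (c := 1)
      (by push_cast; linear_combination h)
    norm_num at this
  set Q : ℕ := a * 10 ^ (l + m + k) with hQ
  have hQ_pos : 0 < Q := by positivity
  have hcleared : 9 * α ^ (n + 3) = Q * (-α ^ 2 + 3 * α + 1) := by
    rw [hC, div_mul_eq_mul_div, div_eq_iff hD] at heq
    rw [pow_add, hα, hQ]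
    push_cast
    linear_combination 9 * heq
  obtain ⟨p, q, r, hpow⟩ := exists_nat_coeffs_pow_of_pow_three_eq hα (n + 3)
  have hcoeff := eq_zero_of_mul_sq_add_mul_add_eq_zero hα (a := 9 * p + Q) (b := 9 * q - 3 * Q)
    (c := 9 * r - Q) (by push_cast; linear_combination hcleared - 9 * hpow)
  norm_cast at hcoeff
  omega
end

section
/- If P_n is a concatenation of three repdigits with digit blocks of lengths l, m, k (digits a, b, c, a ≥ 1), and n > 560, then |9C_α·α^n − a·10^(l+m+k)| < 11·10^(m+k). -/
noncomputable def Eseq (α C : ℝ) (i : ℕ) : ℝ := (padovan i : ℝ) - C * α ^ i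

noncomputable def Qseq (α C : ℝ) (i : ℕ) : ℝ :=
  α * (Eseq α C (i+1))^2 + α^2 * Eseq α C (i+1) * Eseq α C i + (Eseq α C i)^2

lemma alpha_lb (α : ℝ) (hα : α ^ 3 = α + 1) : 1.32 < α := by
  by_contra h
  push_neg at h
  nlinarith [sq_nonneg (α + 1), sq_nonneg (α - 1.32), sq_nonneg (α + 0.6), sq_nonneg α]

lemma alpha_ub (α : ℝ) (hα : α ^ 3 = α + 1) : α < 1.33 := by
  by_contra h
  push_neg at h
  nlinarith [sq_nonneg (α - 1.33), sq_nonneg α]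

lemma Eseq_rec (α C : ℝ) (hα : α ^ 3 = α + 1) (i : ℕ) :
    Eseq α C (i+3) = Eseq α C (i+1) + Eseq α C i := by
  simp only [Eseq]
  rw [show padovan (i+3) = padovan (i+1) + padovan i from rfl]
  push_cast
  linear_combination (-(C * α ^ i)) * hα

lemma Eseq_con (α C : ℝ) (hα : α ^ 3 = α + 1)
    (hbase : α * Eseq α C 2 + α^2 * Eseq α C 1 + Eseq α C 0 = 0) :
    ∀ i, α * Eseq α C (i+2) + α^2 * Eseq α C (i+1) + Eseq α C i = 0 := by
  intro i
  induction i with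
  | zero => exact hbase
  | succ j ih =>
    have hrec := Eseq_rec α C hα j
    linear_combination α * hrec + α * ih - Eseq α C (j+1) * hα

lemma Qseq_step (α C : ℝ) (hα : α ^ 3 = α + 1)
    (hbase : α * Eseq α C 2 + α^2 * Eseq α C 1 + Eseq α C 0 = 0) (i : ℕ) :
    α * Qseq α C (i+1) = Qseq α C i := by
  have hcon := Eseq_con α C hα hbase i
  simp only [Qseq]
  linear_combination (α * Eseq α C (i+2) - Eseq α C i) * hcon

lemma Qseq_pow (α C : ℝ) (hα : α ^ 3 = α + 1)
    (hbase : α * Eseq α C 2 + α^2 * Eseq α C 1 + Eseq α C 0 = 0) :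
    ∀ i, α ^ i * Qseq α C i = Qseq α C 0 := by
  intro i
  induction i with
  | zero => simp
  | succ j ih =>
    have := Qseq_step α C hα hbase j
    calc α ^ (j+1) * Qseq α C (j+1) = α ^ j * (α * Qseq α C (j+1)) := by ring
    _ = α ^ j * Qseq α C j := by rw [this]
    _ = Qseq α C 0 := ih

lemma Qseq_nonneg (α C : ℝ) (hα : α ^ 3 = α + 1) (i : ℕ) : 0 ≤ Qseq α C i := by
  have h1 := alpha_lb α hα
  have h2 := alpha_ub α hα
  simp only [Qseq]
  have h4 : α ^ 4 = α ^ 2 + α := by linear_combination α * hα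
  have h5 : 0 ≤ (4*α - α^4) * (Eseq α C i)^2 :=
    mul_nonneg (by nlinarith) (sq_nonneg _)
  have key : 4*α*(α * Eseq α C (i+1) ^ 2 + α ^ 2 * Eseq α C (i+1) * Eseq α C i + Eseq α C i ^ 2)
      = (2 * α * Eseq α C (i+1) + α^2 * Eseq α C i)^2 + (4*α - α^4) * (Eseq α C i)^2 := by ring
  nlinarith [sq_nonneg (2 * α * Eseq α C (i+1) + α^2 * Eseq α C i)]


set_option maxHeartbeats 1600000 in
lemma Eseq_bound (α : ℝ) (hα : α ^ 3 = α + 1)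
    (C : ℝ) (hC : C = (α + 1) / (-α ^ 2 + 3 * α + 1)) (n : ℕ) :
    -1 ≤ (padovan n : ℝ) - C * α ^ n ∧ (padovan n : ℝ) - C * α ^ n ≤ 1 := by
  have hal := alpha_lb α hα
  have hau := alpha_ub α hα
  have hd_pos : (0:ℝ) < -α^2 + 3*α + 1 := by nlinarith
  have hd_lb : (3.21:ℝ) ≤ -α^2 + 3*α + 1 := by nlinarith
  have hd_ub : -α^2 + 3*α + 1 ≤ (3.23:ℝ) := by nlinarith
  have hd0 : -α ^ 2 + 3 * α + 1 ≠ 0 := ne_of_gt hd_pos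
  have hCd : C * (-α^2 + 3*α + 1) = α + 1 := by
    rw [hC, div_mul_cancel₀ _ hd0]
  have hC_lb : (0.71:ℝ) ≤ C := by
    rw [hC, le_div_iff₀ hd_pos]; nlinarith
  have hC_ub : C ≤ (0.73:ℝ) := by
    rw [hC, div_le_iff₀ hd_pos]; nlinarith
  have h2 : C * (2*α+3) = α^2 + α + 1 := by
    have key : (C * (2*α+3)) * (-α^2+3*α+1) = (α^2+α+1) * (-α^2+3*α+1) := by
      linear_combination (2*α+3) * hCd + (α-2) * hα
    exact mul_right_cancel₀ hd0 key
  have hbase : α * Eseq α C 2 + α^2 * Eseq α C 1 + Eseq α C 0 = 0 := by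
    simp only [Eseq, show padovan 2 = 1 from rfl, show padovan 1 = 1 from rfl,
      show padovan 0 = 1 from rfl]
    push_cast
    linear_combination (-1:ℝ) * h2 - 2*C*hα
  have hE0 : Eseq α C 0 = 1 - C := by simp [Eseq, show padovan 0 = 1 from rfl]
  have hE1 : Eseq α C 1 = 1 - C*α := by simp [Eseq, show padovan 1 = 1 from rfl]
  have hca_lb : (0.93:ℝ) ≤ C*α := by
    nlinarith [mul_nonneg (by linarith : (0:ℝ) ≤ C - 0.71) (by linarith : (0:ℝ) ≤ α - 1.32)]
  have hca_ub : C*α ≤ (0.98:ℝ) := by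
    nlinarith [mul_nonneg (by linarith : (0:ℝ) ≤ 0.73 - C) (by linarith : (0:ℝ) ≤ α)]
  have hv1 : (0.02:ℝ) ≤ 1 - C*α := by linarith
  have hv2 : 1 - C*α ≤ (0.07:ℝ) := by linarith
  have hu1 : (0.27:ℝ) ≤ 1 - C := by linarith
  have hu2 : 1 - C ≤ (0.29:ℝ) := by linarith
  have hv0 : (0:ℝ) ≤ 1 - C*α := by linarith
  have hu0 : (0:ℝ) ≤ 1 - C := by linarith
  have ha2 : α^2 ≤ (1.77:ℝ) := by nlinarith
  have hvu0 : (0:ℝ) ≤ (1-C*α)*(1-C) := mul_nonneg hv0 hu0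
  have hvu : (1-C*α)*(1-C) ≤ (0.021:ℝ) := by nlinarith
  have t1 : α*(1-C*α)^2 ≤ (0.007:ℝ) := by
    nlinarith [mul_nonneg (by linarith : (0:ℝ) ≤ 1.33 - α) (sq_nonneg (1-C*α))]
  have t2 : α^2*((1-C*α)*(1-C)) ≤ (0.04:ℝ) := by
    nlinarith [mul_nonneg (by linarith : (0:ℝ) ≤ 1.77 - α^2) hvu0, sq_nonneg α]
  have t3 : (1-C)^2 ≤ (0.09:ℝ) := by nlinarith
  have hQ0 : Qseq α C 0 ≤ 0.4 := by
    have e0 : Eseq α C (0+1) = 1 - C*α := hE1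
    simp only [Qseq, e0, hE0]
    nlinarith [t1, t2, t3]
  have hpow1 : (1:ℝ) ≤ α ^ n := by
    calc (1:ℝ) = 1^n := (one_pow n).symm
    _ ≤ α^n := pow_le_pow_left₀ (by norm_num) (by linarith) n
  have hQn : Qseq α C n ≤ 0.4 := by
    have hp := Qseq_pow α C hα hbase n
    have hnn := Qseq_nonneg α C hα n
    nlinarith [mul_nonneg (by linarith : (0:ℝ) ≤ α^n - 1) hnn]
  have hEn2 : (Eseq α C n)^2 ≤ 1 := by
    have key : Qseq α C n = α*(Eseq α C (n+1) + α * Eseq α C n / 2)^2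
        + (1 - α^3/4) * (Eseq α C n)^2 := by
      simp only [Qseq]; ring
    nlinarith [mul_nonneg (by linarith : (0:ℝ) ≤ α)
        (sq_nonneg (Eseq α C (n+1) + α * Eseq α C n / 2)),
      mul_nonneg (by nlinarith : (0:ℝ) ≤ 1 - α^3/4 - 0.4) (sq_nonneg (Eseq α C n))]
  have hEub : Eseq α C n ≤ 1 := by nlinarith [sq_nonneg (Eseq α C n - 1)]
  have hElb : -1 ≤ Eseq α C n := by nlinarith [sq_nonneg (Eseq α C n + 1)]
  exact ⟨hElb, hEub⟩

theorem first_linear_form_bound (α : ℝ) (hα : α ^ 3 = α + 1)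
    (C : ℝ) (hC : C = (α + 1) / (-α ^ 2 + 3 * α + 1))
    (n l m k a b c : ℕ)
    (hn : 560 < n) (hl : 1 ≤ l) (hm : 1 ≤ m) (hk : 1 ≤ k)
    (ha1 : 1 ≤ a) (ha : a ≤ 9) (hb : b ≤ 9) (hc : c ≤ 9)
    (heq : (9 * padovan n : ℤ) =
      (a : ℤ) * 10 ^ (l + m + k) - ((a : ℤ) - (b : ℤ)) * 10 ^ (m + k)
        - ((b : ℤ) - (c : ℤ)) * 10 ^ k - (c : ℤ)) :
    |9 * C * α ^ n - (a : ℝ) * 10 ^ (l + m + k)| < 11 * 10 ^ (m + k) := by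
  obtain ⟨hElb, hEub⟩ := Eseq_bound α hα C hC n
  have heqR : (9 * (padovan n : ℝ)) = (a:ℝ) * 10^(l+m+k)
      - ((a:ℝ)-(b:ℝ))*10^(m+k) - ((b:ℝ)-(c:ℝ))*10^k - (c:ℝ) := by
    exact_mod_cast heq
  have hkpos : (0:ℝ) < 10^k := pow_pos (by norm_num) k
  have hmkpos : (0:ℝ) < 10^(m+k) := pow_pos (by norm_num) (m+k)
  have hmk10 : (10:ℝ) * 10^k ≤ 10^(m+k) := by
    rw [pow_add]
    have h10m : (10:ℝ) ≤ 10^m := by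
      calc (10:ℝ) = 10^1 := (pow_one _).symm
      _ ≤ 10^m := pow_le_pow_right₀ (by norm_num) hm
    nlinarith
  have h100 : (100:ℝ) ≤ 10^(m+k) := by
    calc (100:ℝ) = 10^2 := by norm_num
    _ ≤ 10^(m+k) := pow_le_pow_right₀ (by norm_num) (by omega)
  have haR : (a:ℝ) ≤ 9 := by exact_mod_cast ha
  have hbR : (b:ℝ) ≤ 9 := by exact_mod_cast hb
  have hcR : (c:ℝ) ≤ 9 := by exact_mod_cast hc
  have haR0 : (0:ℝ) ≤ (a:ℝ) := Nat.cast_nonneg a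
  have hbR0 : (0:ℝ) ≤ (b:ℝ) := Nat.cast_nonneg b
  have hcR0 : (0:ℝ) ≤ (c:ℝ) := Nat.cast_nonneg c
  have p1 : ((a:ℝ)-(b:ℝ)) * 10^(m+k) ≤ 9 * 10^(m+k) := by nlinarith
  have p2 : -(9 * 10^(m+k)) ≤ ((a:ℝ)-(b:ℝ)) * 10^(m+k) := by nlinarith
  have p3 : ((b:ℝ)-(c:ℝ)) * 10^k ≤ 9 * 10^k := by nlinarith
  have p4 : -(9 * 10^k) ≤ ((b:ℝ)-(c:ℝ)) * 10^k := by nlinarith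
  rw [abs_lt]
  constructor <;>
    linarith [p1, p2, p3, p4, hEub, hElb, heqR, hmk10, h100, hkpos, hmkpos, hcR, hcR0]
end

section
/- For all n ≥ 1, C_α·α^n − α^(−n/2) < P_n < C_α·α^n + α^(−n/2), where α is the real root of x^3 − x − 1 and C_α = (α+1)/(−α^2+3α+1); in particular P_n is the nearest integer to C_α·α^n for n ≥ 3. -/
/-!
The error `E n = P n - C * α ^ n` satisfies the Padovan recurrence, and `C` is exactly the
coefficient for which its component along `α ^ n` vanishes, i.e. `α E (n+2) + α² E (n+1) + E n = 0`.
So `E` lives on the complex roots `β, β̄` of `x³ - x - 1`, where `|β|² = α⁻¹`. The quantity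
`α |E (n+1) - β E n|²` is then a positive definite real quadratic form in `(E n, E (n+1))` that
shrinks by the factor `α` at every step; it dominates `(4 - α³) (E n)² = (3 - α) (E n)²`,
and its initial value is below `1/8`. Hence `α ^ n (E n)² < 1/2`, which gives both claims.
-/

section

variable {α : ℝ}

lemma plastic_bounds (hα : α ^ 3 = α + 1) : 1.32 < α ∧ α < 1.33 :=
  ⟨by nlinarith [sq_nonneg (α + 0.66), sq_nonneg (α - 1.32)],
    by nlinarith [sq_nonneg (α + 0.665), sq_nonneg (α - 1.33)]⟩

/-- Applying `α (x² + α x + α² - 1) = α (x³ - x - 1) / (x - α)` as a shift operator to a solution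
of the Padovan recurrence kills its components along the complex roots. -/
def dominantPart (α : ℝ) (u : ℕ → ℝ) (n : ℕ) : ℝ :=
  α * u (n + 2) + α ^ 2 * u (n + 1) + u n

lemma dominantPart_eq_pow_mul (hα : α ^ 3 = α + 1) {u : ℕ → ℝ}
    (hu : ∀ n, u (n + 3) = u (n + 1) + u n) (n : ℕ) :
    dominantPart α u n = α ^ n * dominantPart α u 0 := by
  induction n with
  | zero => simp
  | succ n ih =>
    have hstep : dominantPart α u (n + 1) = α * dominantPart α u n := by
      simp only [dominantPart, hu]
      linear_combination (-u (n + 1)) * hα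
    rw [hstep, ih, pow_succ]
    ring

/-- `α |y - β x|²` for a complex root `β` of `x³ - x - 1`. -/
def plasticForm (α x y : ℝ) : ℝ := α * y ^ 2 + α ^ 2 * x * y + x ^ 2

lemma pow_mul_plasticForm_eq {E : ℕ → ℝ} (hE : ∀ n, dominantPart α E n = 0) (n : ℕ) :
    α ^ n * plasticForm α (E n) (E (n + 1)) = plasticForm α (E 0) (E 1) := by
  induction n with
  | zero => simp
  | succ n ih =>
    have hstep : α * plasticForm α (E (n + 1)) (E (n + 2)) = plasticForm α (E n) (E (n + 1)) := by
      have h := hE n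
      simp only [dominantPart] at h
      simp only [plasticForm]
      linear_combination (α * E (n + 2) - E n) * h
    rw [← ih, ← hstep, pow_succ]
    ring

lemma sq_mul_le_plasticForm (hα : 0 ≤ α) (x y : ℝ) :
    (4 - α ^ 3) * x ^ 2 ≤ 4 * plasticForm α x y := by
  have : 4 * plasticForm α x y = α * (2 * y + α * x) ^ 2 + (4 - α ^ 3) * x ^ 2 := by
    simp only [plasticForm]
    ring
  nlinarith [mul_nonneg hα (sq_nonneg (2 * y + α * x))]

variable {C : ℝ}

lemma dominantPart_padovan_sub_eq_zero (hα : α ^ 3 = α + 1)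
    (hC : C = (α + 1) / (-α ^ 2 + 3 * α + 1)) (n : ℕ) :
    dominantPart α (fun k ↦ (padovan k : ℝ) - C * α ^ k) n = 0 := by
  have hrec (k : ℕ) : (padovan (k + 3) : ℝ) - C * α ^ (k + 3)
      = ((padovan (k + 1) : ℝ) - C * α ^ (k + 1)) + ((padovan k : ℝ) - C * α ^ k) := by
    simp only [padovan, Nat.cast_add]
    linear_combination (-C * α ^ k) * hα
  have hd : -α ^ 2 + 3 * α + 1 ≠ 0 := by nlinarith [plastic_bounds hα]
  have hC' : C * (-α ^ 2 + 3 * α + 1) = α + 1 := by rw [hC, div_mul_cancel₀ _ hd]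
  have hinit : dominantPart α (fun k ↦ (padovan k : ℝ) - C * α ^ k) 0 = 0 := by
    rw [dominantPart, ← mul_right_inj' hd, mul_zero]
    simp only [padovan, Nat.cast_one]
    linear_combination (-(2 * α ^ 3 + 1)) * hC' + (-3 * α) * hα
  rw [dominantPart_eq_pow_mul hα hrec, hinit, mul_zero]

lemma plasticForm_one_sub_lt (hα : α ^ 3 = α + 1) (hC : C = (α + 1) / (-α ^ 2 + 3 * α + 1)) :
    plasticForm α (1 - C) (1 - C * α) < 1 / 8 := by
  obtain ⟨h1, h2⟩ := plastic_bounds hα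
  have hd : 0 < -α ^ 2 + 3 * α + 1 := by nlinarith
  have hC' : C * (-α ^ 2 + 3 * α + 1) = α + 1 := by rw [hC, div_mul_cancel₀ _ hd.ne']
  have hC_gt : 0.71 < C := by nlinarith
  have hC_lt : C < 0.74 := by nlinarith
  have hCα : 0 < 1 - C * α ∧ 1 - C * α < 0.07 := by constructor <;> nlinarith
  unfold plasticForm
  nlinarith [mul_pos (sub_pos.2 hC_lt) hCα.1]

lemma two_mul_pow_mul_padovan_sub_sq_lt_one (hα : α ^ 3 = α + 1)
    (hC : C = (α + 1) / (-α ^ 2 + 3 * α + 1)) (n : ℕ) :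
    2 * α ^ n * ((padovan n : ℝ) - C * α ^ n) ^ 2 < 1 := by
  set E : ℕ → ℝ := fun k ↦ (padovan k : ℝ) - C * α ^ k
  have hα0 : 0 < α := by linarith [(plastic_bounds hα).1]
  have hF := pow_mul_plasticForm_eq (dominantPart_padovan_sub_eq_zero hα hC) n
  have hF0 : plasticForm α (E 0) (E 1) < 1 / 8 := by
    simpa [E, padovan] using plasticForm_one_sub_lt hα hC
  have hbound : (4 - α ^ 3) * (α ^ n * E n ^ 2) < 1 / 2 :=
    calc (4 - α ^ 3) * (α ^ n * E n ^ 2) = α ^ n * ((4 - α ^ 3) * E n ^ 2) := by ring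
      _ ≤ α ^ n * (4 * plasticForm α (E n) (E (n + 1))) :=
        mul_le_mul_of_nonneg_left (sq_mul_le_plasticForm hα0.le _ _) (pow_nonneg hα0.le n)
      _ < 1 / 2 := by linarith
  have hcoef : 1 < 4 - α ^ 3 := by rw [hα]; linarith [(plastic_bounds hα).2]
  nlinarith [mul_nonneg (pow_nonneg hα0.le n) (sq_nonneg (E n))]

end

theorem padovan_nearest_integer (α : ℝ) (hα : α ^ 3 = α + 1)
    (C : ℝ) (hC : C = (α + 1) / (-α ^ 2 + 3 * α + 1)) :
    ∀ n : ℕ, 1 ≤ n →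
      (C * α ^ n - α ^ (-(n : ℝ) / 2) < (padovan n : ℝ) ∧
       (padovan n : ℝ) < C * α ^ n + α ^ (-(n : ℝ) / 2)) ∧
      (3 ≤ n → (padovan n : ℤ) = round (C * α ^ n)) := by
  intro n _
  have hα1 : 1 < α := by linarith [(plastic_bounds hα).1]
  have hαn : 0 < α ^ n := by positivity
  have hkey := two_mul_pow_mul_padovan_sub_sq_lt_one hα hC n
  set r := α ^ (-(n : ℝ) / 2)
  have hr : α ^ n * r ^ 2 = 1 := by
    rw [← Real.rpow_natCast, ← Real.rpow_mul_natCast (by positivity), ← Real.rpow_add (by positivity)]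
    norm_num
  have hsq : ((padovan n : ℝ) - C * α ^ n) ^ 2 < r ^ 2 := by
    refine lt_of_mul_lt_mul_left ?_ hαn.le
    linarith
  obtain ⟨hlo, hhi⟩ := abs_lt_of_sq_lt_sq' hsq (by positivity)
  refine ⟨⟨by linarith, by linarith⟩, fun hn3 ↦ ?_⟩
  have hα3 : 2 ≤ α ^ n := by
    calc (2 : ℝ) ≤ α ^ 3 := by rw [hα]; linarith
      _ ≤ α ^ n := pow_le_pow_right₀ hα1.le hn3
  have hsq' : ((padovan n : ℝ) - C * α ^ n) ^ 2 < (1 / 2) ^ 2 := by nlinarith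
  obtain ⟨hlo', hhi'⟩ := abs_lt_of_sq_lt_sq' hsq' (by norm_num)
  rw [eq_comm, round_eq_iff]
  push_cast
  constructor <;> linarith
end

section
/- The logarithmic height of C_α = (α+1)/(−α^2+3α+1), where α is the real root of x^3 − x − 1, equals (log 23)/3. -/
/-!
Each root `r` of `23x³ − 23x² + 6x − 1` has `‖r‖ ≤ 1`, so only `log 23` survives in the height.
Indeed `−r` is a root of `23y³ + 23y² + 6y + 1`, whose coefficients increase with the degree,
and the Eneström–Kakeya theorem confines the roots of such polynomials to the closed unit disc:
multiplying by `y − 1` gives `a_n y^(n+1) = a_0 + ∑ (a_(k+1) − a_k) y^(k+1)`, and for `|y| > 1`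
the right-hand side has modulus at most `(a_0 + ∑ (a_(k+1) − a_k)) |y|^n = a_n |y|^n`.
-/

open Finset

theorem sub_one_mul_sum_range_mul_pow {R : Type*} [CommRing R] (a : ℕ → R) (z : R) (n : ℕ) :
    (z - 1) * ∑ k ∈ range (n + 1), a k * z ^ k
      = a n * z ^ (n + 1) - a 0 - ∑ k ∈ range n, (a (k + 1) - a k) * z ^ (k + 1) := by
  induction n with
  | zero => rw [sum_range_one, sum_range_zero]; ring
  | succ n ih =>
    rw [sum_range_succ, mul_add, ih, sum_range_succ]
    ring

theorem norm_le_one_of_sum_eq_zero_of_monotone (a : ℕ → ℝ) (n : ℕ) (h0 : 0 ≤ a 0)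
    (hmono : ∀ k < n, a k ≤ a (k + 1)) (hn : 0 < a n) {z : ℂ}
    (hz : ∑ k ∈ range (n + 1), (a k : ℂ) * z ^ k = 0) : ‖z‖ ≤ 1 := by
  by_contra! hz1
  set r := ‖z‖
  have hlead : (a n : ℂ) * z ^ (n + 1)
      = a 0 + ∑ k ∈ range n, ((a (k + 1) - a k : ℝ) : ℂ) * z ^ (k + 1) := by
    have := sub_one_mul_sum_range_mul_pow (fun k => (a k : ℂ)) z n
    rw [hz, mul_zero] at this
    push_cast
    linear_combination -this
  have : a n * r ^ (n + 1) ≤ a n * r ^ n := calc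
    a n * r ^ (n + 1) = ‖(a n : ℂ) * z ^ (n + 1)‖ := by
      rw [norm_mul, norm_pow, Complex.norm_real, Real.norm_of_nonneg hn.le]
    _ ≤ a 0 + ∑ k ∈ range n, (a (k + 1) - a k) * r ^ (k + 1) := by
      rw [hlead]
      refine (norm_add_le _ _).trans
        (add_le_add ?_ ((norm_sum_le _ _).trans (sum_le_sum fun k hk => ?_)))
      · rw [Complex.norm_real, Real.norm_of_nonneg h0]
      · rw [norm_mul, norm_pow, Complex.norm_real,
          Real.norm_of_nonneg (sub_nonneg.2 (hmono k (mem_range.1 hk)))]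
    _ ≤ a 0 * r ^ n + ∑ k ∈ range n, (a (k + 1) - a k) * r ^ n := by
      refine add_le_add (le_mul_of_one_le_right h0 (one_le_pow₀ hz1.le))
        (sum_le_sum fun k hk =>
          mul_le_mul_of_nonneg_left ?_ (sub_nonneg.2 (hmono k (mem_range.1 hk))))
      exact pow_le_pow_right₀ hz1.le (mem_range.1 hk)
    _ = a n * r ^ n := by
      rw [← sum_mul, sum_range_sub (fun k => a k)]
      ring
  rw [pow_succ, ← mul_one (a n * r ^ n), ← mul_assoc] at this
  exact hz1.not_ge (le_of_mul_le_mul_left this (mul_pos hn (pow_pos (zero_lt_one.trans hz1) n)))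

theorem norm_le_one_of_cubic_eq_zero {r : ℂ} (hr : 23 * r ^ 3 - 23 * r ^ 2 + 6 * r - 1 = 0) :
    ‖r‖ ≤ 1 := by
  have h := norm_le_one_of_sum_eq_zero_of_monotone
    (fun k => if k = 0 then 1 else if k = 1 then 6 else 23) 3 (by norm_num)
    (fun k hk => by interval_cases k <;> norm_num) (by norm_num) (z := -r)
    (by simp only [sum_range_succ]; push_cast; linear_combination -hr)
  rwa [norm_neg] at h

theorem height_C_alpha (r₁ r₂ r₃ : ℂ)
    (h : ∀ x : ℂ, 23 * x ^ 3 - 23 * x ^ 2 + 6 * x - 1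
          = 23 * (x - r₁) * (x - r₂) * (x - r₃)) :
    (1 / 3 : ℝ) * (Real.log 23 + max 0 (Real.log ‖r₁‖)
      + max 0 (Real.log ‖r₂‖) + max 0 (Real.log ‖r₃‖))
      = Real.log 23 / 3 := by
  have hlog : ∀ r : ℂ, 23 * r ^ 3 - 23 * r ^ 2 + 6 * r - 1 = 0 → max 0 (Real.log ‖r‖) = 0 :=
    fun r hr => max_eq_left (Real.log_nonpos (norm_nonneg r) (norm_le_one_of_cubic_eq_zero hr))
  rw [hlog r₁ (by rw [h]; ring), hlog r₂ (by rw [h]; ring), hlog r₃ (by rw [h]; ring)]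
  ring
end
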